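/- (Corollary 1) Let μ be a probability measure on ℝ^{n_x} × ℝ, let T : ℝ^{n_x} → ℝ be a measurable predictor, and let ε ∈ (0,1), δ ∈ (0,1). Let the integer N satisfy N ≥ (7.47/ε) · ln(1/δ) and set r = ⌊εN/2⌋, assuming r ≥ 1. If (x₁,y₁), …, (x_N,y_N) are drawn i.i.d. from μ and q_i = |y_i − T(x_i)| for i = 1,…,N, then the value ρ = rmax_r{q_i}_{i=1}^N satisfies, with probability no smaller than 1−δ over the multisample drawn from the product measure μ^N, μ{ (x,y) : |y − T(x)| > ρ } ≤ ε. -/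

import Mathlib

/-!
Let `t` be an upper `ε`-quantile of the score `s (x, y) = |y - T x|`, i.e.
`μ {s > t} ≤ ε ≤ μ {s ≥ t}`; it is a generalized inverse of the cdf of `s` at level `1 - ε`.
If at least `r` of the samples have score `≥ t`, their `r`-th largest score `ρ` is `≥ t`, so
`μ {s > ρ} ≤ μ {s > t} ≤ ε`. The number `C` of samples with score `≥ t` is binomial with success
probability `p ≥ ε`, and Markov's inequality for `2⁻ᶜ`, whose mean is `(1 - p / 2) ^ N`, gives
`P (C ≤ r) ≤ 2 ^ r (1 - ε / 2) ^ N ≤ exp (-ε N (1 - log 2) / 2) ≤ δ` since `r ≤ ε N / 2`.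
-/

open MeasureTheory

/-- The `r`-th largest value of the collection `{q i}_{i=1}^N`
(the element at position `r` in decreasing order, counted with multiplicity). -/
noncomputable def rmax {N : ℕ} (r : ℕ) (q : Fin N → ℝ) : ℝ :=
  ((List.ofFn q).insertionSort (· ≤ ·)).getD (N - r) 0

open Filter Set ProbabilityTheory
open scoped Finset

theorem List.Pairwise.le_getD_length_sub {α : Type*} [LinearOrder α] {l : List α}
    (hl : l.Pairwise (· ≤ ·)) {t d : α} {r : ℕ} (hr : 1 ≤ r)
    (hcount : r ≤ l.countP (t ≤ ·)) : t ≤ l.getD (l.length - r) d := by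
  have hk : l.length - r < l.length := by
    have := hcount.trans List.countP_le_length; omega
  rw [List.getD_eq_getElem _ _ hk]
  by_contra! hlt
  have hhead : (l.take (l.length - r + 1)).countP (t ≤ ·) = 0 := by
    refine List.countP_eq_zero.mpr fun a ha => ?_
    obtain ⟨i, hi, rfl⟩ := List.mem_take_iff_getElem.mp ha
    have hle : l[i] ≤ l[l.length - r] :=
      hl.rel_get_of_le (a := ⟨i, by omega⟩) (b := ⟨_, hk⟩) (by simp only [Fin.mk_le_mk]; omega)
    simpa using hle.trans_lt hlt
  have htail := (l.drop (l.length - r + 1)).countP_le_length (p := (t ≤ ·))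
  rw [← l.take_append_drop (l.length - r + 1), List.countP_append, hhead] at hcount
  simp only [List.length_drop] at htail
  omega

theorem List.countP_ofFn {α : Type*} {N : ℕ} (q : Fin N → α) (p : α → Prop) [DecidablePred p] :
    (List.ofFn q).countP (fun x => p x) = #{i | p (q i)} := by
  rw [← Multiset.coe_countP, ← Fin.univ_val_map, Multiset.countP_map, Finset.card_def,
    Finset.filter_val]

theorem le_rmax {N r : ℕ} {q : Fin N → ℝ} {t : ℝ} (hr : 1 ≤ r) (hcount : r ≤ #{i | t ≤ q i}) :
    t ≤ rmax r q := by
  have hsorted := List.pairwise_insertionSort (· ≤ ·) (List.ofFn q)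
  have h := hsorted.le_getD_length_sub (d := 0) hr
    (by rwa [(List.perm_insertionSort _ _).countP_eq, List.countP_ofFn])
  simpa [rmax] using h

theorem StieltjesFunction.exists_leftLim_le_le (F : StieltjesFunction ℝ) {c : ℝ}
    (hbot : ∃ x, F x < c) (htop : ∃ x, c ≤ F x) : ∃ t, Function.leftLim F t ≤ c ∧ c ≤ F t := by
  set S := {x | c ≤ F x}
  obtain ⟨x₀, hx₀⟩ := hbot
  have hbdd : BddBelow S := ⟨x₀, fun s hs => (F.mono.reflect_lt (hx₀.trans_le hs)).le⟩
  refine ⟨sInf S, ?_, ?_⟩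
  · rw [F.mono.leftLim_eq_sSup]
    refine csSup_le (nonempty_Iio.image _) ?_
    rintro _ ⟨x, hx, rfl⟩
    exact (not_le.mp fun h => (csInf_le hbdd h).not_gt hx).le
  · refine ge_of_tendsto ((F.right_continuous _).mono Ioi_subset_Ici_self) ?_
    filter_upwards [self_mem_nhdsWithin] with x hx
    obtain ⟨s, hs, hsx⟩ := (csInf_lt_iff hbdd htop).mp hx
    exact hs.trans (F.mono hsx.le)

theorem exists_measure_Ioi_le_le_measure_Ici (ν : Measure ℝ) [IsProbabilityMeasure ν] {ε : ℝ}
    (hε₀ : 0 < ε) (hε₁ : ε < 1) :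
    ∃ t, ν (Ioi t) ≤ ENNReal.ofReal ε ∧ ENNReal.ofReal ε ≤ ν (Ici t) := by
  obtain ⟨x₀, hx₀⟩ := ((tendsto_cdf_atBot ν).eventually (gt_mem_nhds (sub_pos.mpr hε₁))).exists
  obtain ⟨x₁, hx₁⟩ :=
    ((tendsto_cdf_atTop ν).eventually (lt_mem_nhds (sub_lt_self 1 hε₀))).exists
  obtain ⟨t, hleft, hright⟩ := (cdf ν).exists_leftLim_le_le ⟨x₀, hx₀⟩ ⟨x₁, hx₁.le⟩
  refine ⟨t, ?_, ?_⟩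
  · rw [← measure_cdf ν, (cdf ν).measure_Ioi (tendsto_cdf_atTop ν)]
    exact ENNReal.ofReal_le_ofReal (by linarith)
  · rw [← measure_cdf ν, (cdf ν).measure_Ici (tendsto_cdf_atTop ν)]
    exact ENNReal.ofReal_le_ofReal (by linarith)

theorem exists_measure_lt_le_le_measure_le {Ω : Type*} [MeasurableSpace Ω] (μ : Measure Ω)
    [IsProbabilityMeasure μ] {f : Ω → ℝ} (hf : Measurable f) {ε : ℝ} (hε₀ : 0 < ε) (hε₁ : ε < 1) :
    ∃ t, μ {x | t < f x} ≤ ENNReal.ofReal ε ∧ ENNReal.ofReal ε ≤ μ {x | t ≤ f x} := by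
  have := Measure.isProbabilityMeasure_map (μ := μ) hf.aemeasurable
  obtain ⟨t, ht⟩ := exists_measure_Ioi_le_le_measure_Ici (μ.map f) hε₀ hε₁
  rw [Measure.map_apply hf measurableSet_Ioi, Measure.map_apply hf measurableSet_Ici] at ht
  exact ⟨t, ht⟩

theorem measureReal_card_le_mul_pow_le {ι Ω : Type*} [Fintype ι] [MeasurableSpace Ω]
    (μ : Measure Ω) [IsProbabilityMeasure μ] {A : Set Ω} [DecidablePred (· ∈ A)]
    (hA : MeasurableSet A) {a : ℝ} (ha₀ : 0 < a) (ha₁ : a ≤ 1) (k : ℕ) :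
    (Measure.pi fun _ : ι => μ).real {w | #{i | w i ∈ A} ≤ k} * a ^ k ≤
      (1 - (1 - a) * μ.real A) ^ Fintype.card ι := by
  set g : Ω → ℝ := A.piecewise (fun _ => a) (fun _ => 1)
  have hg_int : Integrable g μ := Integrable.piecewise hA integrableOn_const integrableOn_const
  have hg : ∫ x, g x ∂μ = 1 - (1 - a) * μ.real A := by
    rw [integral_piecewise hA integrableOn_const integrableOn_const, setIntegral_const,
      setIntegral_const, probReal_compl_eq_one_sub hA, smul_eq_mul, smul_eq_mul]
    ring
  have hprod (w : ι → Ω) : ∏ i, g (w i) = a ^ #{i | w i ∈ A} := by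
    simp [g, Set.piecewise, Finset.prod_ite]
  have hsub : {w : ι → Ω | #{i | w i ∈ A} ≤ k} ⊆ {w | a ^ k ≤ ∏ i, g (w i)} := fun w hw => by
    rw [mem_ofPred_eq, hprod]
    exact pow_le_pow_of_le_one ha₀.le ha₁ hw
  calc _ ≤ (Measure.pi fun _ : ι => μ).real {w | a ^ k ≤ ∏ i, g (w i)} * a ^ k :=
        mul_le_mul_of_nonneg_right (measureReal_mono hsub) (pow_nonneg ha₀.le k)
    _ = a ^ k * (Measure.pi fun _ : ι => μ).real {w | a ^ k ≤ ∏ i, g (w i)} := mul_comm _ _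
    _ ≤ ∫ w, ∏ i, g (w i) ∂(Measure.pi fun _ : ι => μ) :=
        mul_meas_ge_le_integral_of_nonneg
          (Eventually.of_forall fun w => by simp only [Pi.zero_apply]; rw [hprod]; positivity)
          (Integrable.fintype_prod fun _ => hg_int) _
    _ = _ := by rw [integral_fintype_prod_eq_pow, hg]

theorem one_sub_half_pow_le {ε δ : ℝ} {N r : ℕ} (hε₀ : 0 < ε) (hε₂ : ε ≤ 2) (hδ₀ : 0 < δ)
    (hδ₁ : δ ≤ 1) (hN : 7.47 / ε * Real.log (1 / δ) ≤ N) (hr : (r : ℝ) ≤ ε * N / 2) :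
    (1 - ε / 2) ^ N ≤ δ * (1 / 2) ^ r := by
  have hL : 0 ≤ Real.log (1 / δ) := Real.log_nonneg (one_le_one_div hδ₀ hδ₁)
  have hεN : 7.47 * Real.log (1 / δ) ≤ ε * N := by
    rwa [div_mul_eq_mul_div, div_le_iff₀ hε₀, mul_comm (N : ℝ)] at hN
  have hlog2 : Real.log 2 < 0.6931471808 := Real.log_two_lt_d9
  -- `7.47 * (1 - log 2) / 2 > 1`
  have hexponent : -(ε * N / 2) ≤ Real.log δ - r * Real.log 2 := by
    have h₁ := mul_le_mul_of_nonneg_right hεN (by linarith : (0 : ℝ) ≤ 1 - Real.log 2)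
    have h₂ := mul_le_mul_of_nonneg_left hlog2.le hL
    have h₃ := mul_le_mul_of_nonneg_right hr (Real.log_nonneg one_le_two)
    rw [one_div, Real.log_inv] at h₁ h₂ hL
    nlinarith
  calc (1 - ε / 2) ^ N ≤ Real.exp (-(ε / 2)) ^ N := by
        gcongr
        · linarith
        · linarith [Real.add_one_le_exp (-(ε / 2))]
    _ = Real.exp (-(ε * N / 2)) := by rw [← Real.exp_nat_mul]; ring_nf
    _ ≤ Real.exp (Real.log δ - r * Real.log 2) := Real.exp_le_exp.mpr hexponent
    _ = δ * (1 / 2) ^ r := by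
        rw [Real.exp_sub, Real.exp_log hδ₀, Real.exp_nat_mul, Real.exp_log two_pos, one_div_pow,
          mul_one_div]

theorem measureReal_card_le_le {Ω : Type*} [MeasurableSpace Ω] (μ : Measure Ω)
    [IsProbabilityMeasure μ] {A : Set Ω} [DecidablePred (· ∈ A)] (hA : MeasurableSet A)
    {ε δ : ℝ} {N r : ℕ} (hε₀ : 0 < ε) (hεA : ε ≤ μ.real A) (hδ₀ : 0 < δ) (hδ₁ : δ ≤ 1)
    (hN : 7.47 / ε * Real.log (1 / δ) ≤ N) (hr : (r : ℝ) ≤ ε * N / 2) :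
    (Measure.pi fun _ : Fin N => μ).real {w | #{i | w i ∈ A} ≤ r} ≤ δ := by
  have hA₁ : μ.real A ≤ 1 := measureReal_le_one
  have hchernoff := measureReal_card_le_mul_pow_le (ι := Fin N) μ hA one_half_pos
    one_half_lt_one.le r
  rw [Fintype.card_fin] at hchernoff
  have hpow : (1 - (1 - 1 / 2) * μ.real A) ^ N ≤ (1 - ε / 2) ^ N := by
    gcongr <;> linarith
  exact le_of_mul_le_mul_right
    (hchernoff.trans (hpow.trans (one_sub_half_pow_le hε₀ (by linarith) hδ₀ hδ₁ hN hr)))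
    (by positivity)

theorem ofReal_one_sub_le_measure_compl {Ω : Type*} [MeasurableSpace Ω] (μ : Measure Ω)
    [IsProbabilityMeasure μ] {s : Set Ω} {δ : ℝ} (hδ : 0 ≤ δ) (hs : μ.real s ≤ δ) :
    ENNReal.ofReal (1 - δ) ≤ μ sᶜ :=
  calc ENNReal.ofReal (1 - δ) = 1 - ENNReal.ofReal δ := by
        rw [ENNReal.ofReal_sub 1 hδ, ENNReal.ofReal_one]
    _ ≤ 1 - μ s :=
        tsub_le_tsub_left ((ENNReal.le_ofReal_iff_toReal_le (measure_ne_top _ _) hδ).mpr hs) 1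
    _ ≤ μ sᶜ := by
        rw [tsub_le_iff_left, ← measure_univ (μ := μ), ← union_compl_self s]
        exact measure_union_le s sᶜ

theorem stmt7 (nx : ℕ) (μ : Measure ((Fin nx → ℝ) × ℝ)) [IsProbabilityMeasure μ]
    (T : (Fin nx → ℝ) → ℝ) (hT : Measurable T)
    (ε δ : ℝ) (hε : ε ∈ Set.Ioo (0 : ℝ) 1) (hδ : δ ∈ Set.Ioo (0 : ℝ) 1)
    (N r : ℕ) (hN : 7.47 / ε * Real.log (1 / δ) ≤ (N : ℝ))
    (hrdef : (r : ℤ) = ⌊ε * (N : ℝ) / 2⌋) (hr : 1 ≤ r) :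
    ENNReal.ofReal (1 - δ) ≤
      (Measure.pi fun _ : Fin N => μ)
        {w : Fin N → (Fin nx → ℝ) × ℝ |
          μ {p : (Fin nx → ℝ) × ℝ |
              rmax r (fun i => |(w i).2 - T (w i).1|) < |p.2 - T p.1|} ≤
            ENNReal.ofReal ε} := by
  obtain ⟨hε₀, hε₁⟩ := hε
  obtain ⟨hδ₀, hδ₁⟩ := hδ
  set score : (Fin nx → ℝ) × ℝ → ℝ := fun p => |p.2 - T p.1|
  have hscore : Measurable score := (measurable_snd.sub (hT.comp measurable_fst)).abs
  obtain ⟨t, htail, hmass⟩ := exists_measure_lt_le_le_measure_le μ hscore hε₀ hε₁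
  have hrε : (r : ℝ) ≤ ε * N / 2 := by
    rw [← Int.cast_natCast, hrdef]
    exact Int.floor_le _
  have hA : MeasurableSet {p | t ≤ score p} := hscore measurableSet_Ici
  have hfew := measureReal_card_le_le μ hA hε₀
    ((ENNReal.ofReal_le_iff_le_toReal (measure_ne_top _ _)).mp hmass) hδ₀ hδ₁.le hN hrε
  refine (ofReal_one_sub_le_measure_compl _ hδ₀.le hfew).trans
    (measure_mono fun w (hw : ¬_ ≤ r) => ?_)
  exact (measure_mono fun p hp => (le_rmax hr (not_le.mp hw).le).trans_lt hp).trans htail
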